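/- arXiv:2411.14884 — 2 statements merged into one kernel-verified Lean document; each statement's English description precedes it below -/
import Mathlib

section
/- Suppose that for every x in the standard simplex, ℙ[x^T Q̃ x ≤ t] = F((t − μ(x))/σ(x)) with μ(x) = x^T M x, σ(x) = x^T S x > 0, where F is a continuous cdf strictly increasing where positive, and let α ∈ (0,1) lie in the range of F. Then the chance-constrained epigraphic problem min{t : ℙ[x^T Q̃ x ≤ t] ≥ α, x ∈ Δ} has optimal value equal to min_{x ∈ Δ} x^T (M + F^{-1}(α) S) x. -/
open Matrix

/-- Under the location-scale distributional assumption, the chance-constrained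
epigraphic StQP has the same optimal value as the deterministic StQP with matrix
`M + F⁻¹(α) • S`, where `F⁻¹(α) = min {t | F t ≥ α}` is the generalized inverse. -/
theorem stmt7 {n : ℕ} (hn : 0 < n)
    (M S : Matrix (Fin n) (Fin n) ℝ) (hM : M.IsSymm) (hSsymm : S.IsSymm)
    (hSpos : ∀ x ∈ stdSimplex ℝ (Fin n), 0 < x ⬝ᵥ S.mulVec x)
    (F : ℝ → ℝ) (hFcont : Continuous F) (hFmono : Monotone F)
    (hFstrict : StrictMonoOn F {t : ℝ | 0 < F t})
    (hF01 : ∀ t, 0 ≤ F t ∧ F t ≤ 1)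
    (α : ℝ) (hα : α ∈ Set.Ioo (0 : ℝ) 1)
    (q : ℝ) (hq : IsLeast {t : ℝ | α ≤ F t} q)
    (P : (Fin n → ℝ) → ℝ → ℝ)  -- P x t = ℙ[xᵀ Q̃ x ≤ t]
    (hP : ∀ x ∈ stdSimplex ℝ (Fin n), ∀ t : ℝ,
      P x t = F ((t - x ⬝ᵥ M.mulVec x) / (x ⬝ᵥ S.mulVec x))) :
    sInf {t : ℝ | ∃ x ∈ stdSimplex ℝ (Fin n), α ≤ P x t}
      = sInf ((fun x => x ⬝ᵥ (M + q • S).mulVec x) '' stdSimplex ℝ (Fin n)) := by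
  have hiff : ∀ x ∈ stdSimplex ℝ (Fin n), ∀ t : ℝ,
      (α ≤ P x t ↔ x ⬝ᵥ (M + q • S).mulVec x ≤ t) := by
    intro x hx t
    have hσ := hSpos x hx
    have hval : x ⬝ᵥ (M + q • S).mulVec x
        = x ⬝ᵥ M.mulVec x + q * (x ⬝ᵥ S.mulVec x) := by
      simp [add_mulVec, smul_mulVec, dotProduct_add, dotProduct_smul,
        smul_eq_mul]
    rw [hP x hx t, hval]
    constructor
    · intro h
      have hle : q ≤ (t - x ⬝ᵥ M.mulVec x) / (x ⬝ᵥ S.mulVec x) := hq.2 h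
      rw [le_div_iff₀ hσ] at hle
      linarith
    · intro h
      have hle : q ≤ (t - x ⬝ᵥ M.mulVec x) / (x ⬝ᵥ S.mulVec x) := by
        rw [le_div_iff₀ hσ]; linarith
      exact le_trans hq.1 (hFmono hle)
  set f : (Fin n → ℝ) → ℝ := fun x => x ⬝ᵥ (M + q • S).mulVec x with hf
  have hfc : Continuous f :=
    Continuous.dotProduct continuous_id
      (Continuous.matrix_mulVec continuous_const continuous_id)
  have hne : (stdSimplex ℝ (Fin n)).Nonempty :=
    ⟨Pi.single ⟨0, hn⟩ 1, single_mem_stdSimplex ℝ _⟩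
  have hBne : (f '' stdSimplex ℝ (Fin n)).Nonempty := hne.image f
  have hBbdd : BddBelow (f '' stdSimplex ℝ (Fin n)) :=
    ((isCompact_stdSimplex ℝ (Fin n)).image hfc).bddBelow
  apply le_antisymm
  · apply csInf_le_csInf _ hBne
    · intro t ht
      obtain ⟨x, hx, rfl⟩ := ht
      exact ⟨x, hx, (hiff x hx _).2 le_rfl⟩
    · rcases hBbdd with ⟨c, hc⟩
      exact ⟨c, fun t ht => by
        obtain ⟨x, hx, hxt⟩ := ht
        exact le_trans (hc ⟨x, hx, rfl⟩) ((hiff x hx t).1 hxt)⟩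
  · apply le_csInf
    · obtain ⟨x, hx⟩ := hne
      exact ⟨f x, x, hx, (hiff x hx _).2 le_rfl⟩
    · intro t ht
      obtain ⟨x, hx, hxt⟩ := ht
      exact le_trans (csInf_le hBbdd ⟨x, hx, rfl⟩) ((hiff x hx t).1 hxt)
end

section
/- The deterministic counterpart of the robust StQP with Frobenius ball uncertainty equals the CCEStQP objective: min_{x ∈ Δ} max_{‖U‖_F ≤ ρ, U = U^T} x^T (Q_nom + U) x = min_{x ∈ Δ} x^T (Q_nom + ρ I_n) x. -/
open Matrix

/-- The Frobenius norm `‖U‖_F = √(trace (Uᵀ U))`. -/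
noncomputable def frobNorm {n : ℕ} (U : Matrix (Fin n) (Fin n) ℝ) : ℝ :=
  Real.sqrt (Matrix.trace (Uᵀ * U))

lemma quad_eq' {n : ℕ} (U : Matrix (Fin n) (Fin n) ℝ) (x : Fin n → ℝ) :
    x ⬝ᵥ U.mulVec x = ∑ p : Fin n × Fin n, U p.1 p.2 * (x p.1 * x p.2) := by
  rw [Fintype.sum_prod_type]
  simp only [dotProduct, Matrix.mulVec, Finset.mul_sum]
  refine Finset.sum_congr rfl fun i _ => Finset.sum_congr rfl fun j _ => by ring

lemma frob_sq' {n : ℕ} (U : Matrix (Fin n) (Fin n) ℝ) :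
    Matrix.trace (Uᵀ * U) = ∑ p : Fin n × Fin n, U p.1 p.2 ^ 2 := by
  rw [Fintype.sum_prod_type]
  simp [Matrix.trace, Matrix.mul_apply, Matrix.diag, sq]
  rw [Finset.sum_comm]

lemma gsum' {n : ℕ} (x : Fin n → ℝ) :
    ∑ p : Fin n × Fin n, (x p.1 * x p.2) ^ 2 = (∑ i, x i ^ 2) ^ 2 := by
  rw [Fintype.sum_prod_type, sq (∑ i, x i ^ 2), Finset.sum_mul_sum]
  simp [mul_pow]

lemma upper' {n : ℕ} (ρ : ℝ) (hρ : 0 < ρ) (U : Matrix (Fin n) (Fin n) ℝ)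
    (hU : frobNorm U ≤ ρ) (x : Fin n → ℝ) :
    x ⬝ᵥ U.mulVec x ≤ ρ * ∑ i, x i ^ 2 := by
  have htr : (0:ℝ) ≤ Matrix.trace (Uᵀ * U) := by
    rw [frob_sq']; positivity
  have hsq := Real.sq_sqrt htr
  have htr2 : Matrix.trace (Uᵀ * U) ≤ ρ ^ 2 := by
    unfold frobNorm at hU
    nlinarith [Real.sqrt_nonneg (Matrix.trace (Uᵀ * U))]
  have cs := Finset.sum_mul_sq_le_sq_mul_sq Finset.univ
    (fun p : Fin n × Fin n => U p.1 p.2) (fun p => x p.1 * x p.2)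
  rw [gsum'] at cs
  rw [quad_eq']
  rw [frob_sq'] at htr2
  have hs : (0:ℝ) ≤ ∑ i, x i ^ 2 := by positivity
  nlinarith [cs, mul_nonneg hρ.le hs, sq_nonneg (∑ i, x i ^ 2)]

lemma achieve' {n : ℕ} (ρ : ℝ) (hρ : 0 < ρ) (x : Fin n → ℝ) (hs : 0 < ∑ i, x i ^ 2) :
    ∃ U : Matrix (Fin n) (Fin n) ℝ, U.IsSymm ∧ frobNorm U ≤ ρ ∧
      x ⬝ᵥ U.mulVec x = ρ * ∑ i, x i ^ 2 := by
  set s := ∑ i, x i ^ 2 with hsdef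
  refine ⟨(ρ / s) • Matrix.vecMulVec x x, ?_, ?_, ?_⟩
  · ext i j
    simp [Matrix.vecMulVec, Matrix.transpose_apply, mul_comm]
  · unfold frobNorm
    rw [frob_sq']
    have : ∑ p : Fin n × Fin n, ((ρ / s) • Matrix.vecMulVec x x) p.1 p.2 ^ 2
        = (ρ / s)^2 * s^2 := by
      rw [← gsum' x, Finset.mul_sum]
      exact Finset.sum_congr rfl fun p _ => by
        simp [Matrix.vecMulVec]; ring
    rw [this]
    have : (ρ / s)^2 * s^2 = ρ^2 := by field_simp
    rw [this, Real.sqrt_sq hρ.le]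
  · simp only [dotProduct, Matrix.mulVec, Matrix.smul_apply, Matrix.vecMulVec_apply]
    have key : ∀ i : Fin n, x i * ∑ j, (ρ / s) • (x i * x j) * x j
        = (ρ / s) * (x i ^ 2 * s) := by
      intro i
      rw [Finset.mul_sum]
      have h1 : (ρ / s) * (x i ^ 2 * s) = ∑ j, (ρ / s) * (x i ^ 2 * x j ^ 2) := by
        rw [hsdef, Finset.mul_sum, Finset.mul_sum]
      rw [h1]
      exact Finset.sum_congr rfl fun j _ => by simp only [smul_eq_mul]; ring
    rw [Finset.sum_congr rfl fun i _ => key i, ← Finset.mul_sum, ← Finset.sum_mul,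
      ← hsdef]
    field_simp

/-- The robust StQP with Frobenius-ball uncertainty set of radius `ρ` has the same
optimal value as the deterministic StQP with matrix `Q_nom + ρ I_n`. -/
theorem stmt12 {n : ℕ} (hn : 0 < n) (Qnom : Matrix (Fin n) (Fin n) ℝ)
    (hQ : Qnom.IsSymm) (ρ : ℝ) (hρ : 0 < ρ) :
    sInf ((fun x => sSup {v : ℝ | ∃ U : Matrix (Fin n) (Fin n) ℝ,
          U.IsSymm ∧ frobNorm U ≤ ρ ∧ v = x ⬝ᵥ (Qnom + U).mulVec x}) '' stdSimplex ℝ (Fin n))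
      = sInf ((fun x => x ⬝ᵥ (Qnom + ρ • (1 : Matrix (Fin n) (Fin n) ℝ)).mulVec x) ''
          stdSimplex ℝ (Fin n)) := by
  congr 1
  refine Set.image_congr fun x hx => ?_
  obtain ⟨hx0, hx1⟩ := hx
  -- positivity of ∑ x i ^ 2
  have hs : 0 < ∑ i, x i ^ 2 := by
    by_contra h
    push_neg at h
    have hz : ∀ i, x i = 0 := by
      intro i
      have h1 : ∑ i, x i ^ 2 = 0 :=
        le_antisymm h (by positivity)
      have := (Finset.sum_eq_zero_iff_of_nonneg (fun i _ => sq_nonneg (x i))).mp h1 i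
        (Finset.mem_univ i)
      exact pow_eq_zero_iff (by norm_num) |>.mp this
    rw [Finset.sum_congr rfl fun i _ => hz i] at hx1
    simp at hx1
  -- the target value
  have hrhs : x ⬝ᵥ (Qnom + ρ • (1 : Matrix (Fin n) (Fin n) ℝ)).mulVec x
      = x ⬝ᵥ Qnom.mulVec x + ρ * ∑ i, x i ^ 2 := by
    rw [Matrix.add_mulVec, dotProduct_add, Matrix.smul_mulVec,
      Matrix.one_mulVec, dotProduct_smul]
    congr 1
    simp [dotProduct, smul_eq_mul, Finset.mul_sum, sq]
  set c := x ⬝ᵥ Qnom.mulVec x + ρ * ∑ i, x i ^ 2 with hc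
  rw [hrhs]
  -- membership
  obtain ⟨U₀, hU₀s, hU₀n, hU₀v⟩ := achieve' ρ hρ x hs
  have hmem : c ∈ {v : ℝ | ∃ U : Matrix (Fin n) (Fin n) ℝ,
      U.IsSymm ∧ frobNorm U ≤ ρ ∧ v = x ⬝ᵥ (Qnom + U).mulVec x} := by
    refine ⟨U₀, hU₀s, hU₀n, ?_⟩
    rw [Matrix.add_mulVec, dotProduct_add, hU₀v]
  have hub : ∀ v ∈ {v : ℝ | ∃ U : Matrix (Fin n) (Fin n) ℝ,
      U.IsSymm ∧ frobNorm U ≤ ρ ∧ v = x ⬝ᵥ (Qnom + U).mulVec x}, v ≤ c := by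
    rintro v ⟨U, hUs, hUn, rfl⟩
    rw [Matrix.add_mulVec, dotProduct_add]
    exact add_le_add_right (upper' ρ hρ U hUn x) _
  exact le_antisymm (csSup_le ⟨c, hmem⟩ hub) (le_csSup ⟨c, hub⟩ hmem)
end
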